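/- If B = [a b] is a reduced basis with a1*b1 ≥ 0, a2*b2 ≤ 0, |a1| = |a2|, then for all integers z1, z2 with z1 ≠ 0 and z2 ≠ 0, the vector v = z1·a + z2·b satisfies ‖v‖∞ ≥ ‖a‖∞. -/
import Mathlib

lemma aux_abs (x y : ℝ) (h : 0 ≤ x * y) : |x| ≤ |x + y| := by
  nlinarith [abs_nonneg x, abs_nonneg (x + y), sq_abs x, sq_abs (x + y), sq_nonneg y]

/-- If `B = [a b]` is a reduced basis with `a1*b1 ≥ 0`, `a2*b2 ≤ 0` and
`|a1| = |a2|`, then for all integers `z1 ≠ 0`, `z2 ≠ 0`, the vector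
`v = z1•a + z2•b` satisfies `‖v‖∞ ≥ ‖a‖∞`. -/
theorem stmt3 (a1 a2 b1 b2 : ℝ)
    (hind : a1 * b2 - a2 * b1 ≠ 0)
    (hred1 : a1 * a2 * b1 * b2 ≤ 0)
    (hred2 : (|a1| - |a2|) * (|b1| - |b2|) ≤ 0)
    (h1 : a1 * b1 ≥ 0) (h2 : a2 * b2 ≤ 0) (heq : |a1| = |a2|)
    (z1 z2 : ℤ) (hz1 : z1 ≠ 0) (hz2 : z2 ≠ 0) :
    max |(z1 : ℝ) * a1 + (z2 : ℝ) * b1| |(z1 : ℝ) * a2 + (z2 : ℝ) * b2|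
      ≥ max |a1| |a2| := by
  have hz1' : (1 : ℝ) ≤ |(z1 : ℝ)| := by
    have : (1 : ℤ) ≤ |z1| := Int.one_le_abs hz1
    calc (1:ℝ) ≤ ((|z1| : ℤ) : ℝ) := by exact_mod_cast this
    _ = |(z1:ℝ)| := by push_cast; rfl
  have hmax : max |a1| |a2| = |a1| := by rw [heq]; simp
  rw [hmax]
  rcases le_or_gt 0 ((z1 : ℝ) * (z2 : ℝ)) with hs | hs
  · -- first coordinate
    have key : |(z1:ℝ) * a1| ≤ |(z1:ℝ) * a1 + (z2:ℝ) * b1| := by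
      apply aux_abs
      have : (z1:ℝ) * a1 * ((z2:ℝ) * b1) = ((z1:ℝ) * (z2:ℝ)) * (a1 * b1) := by ring
      rw [this]
      exact mul_nonneg hs h1
    have h1' : |a1| ≤ |(z1:ℝ) * a1| := by
      rw [abs_mul]
      nlinarith [abs_nonneg a1]
    exact le_max_of_le_left (h1'.trans key)
  · -- second coordinate
    have key : |(z1:ℝ) * a2| ≤ |(z1:ℝ) * a2 + (z2:ℝ) * b2| := by
      apply aux_abs
      have : (z1:ℝ) * a2 * ((z2:ℝ) * b2) = ((z1:ℝ) * (z2:ℝ)) * (a2 * b2) := by ring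
      rw [this]
      nlinarith
    have h2' : |a1| ≤ |(z1:ℝ) * a2| := by
      rw [abs_mul, heq]
      nlinarith [abs_nonneg a2]
    exact le_max_of_le_right (h2'.trans key)
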